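/- arXiv:2506.04638 — 8 statements merged into one kernel-verified Lean document; each statement's English description precedes it below -/
import Mathlib

section
/- Let Ω ⊆ ℂ² be open, a, b, c : Ω → ℂ holomorphic, and suppose the invariant h := ∂_x a + a·b − c is nonvanishing on Ω. Let u : Ω → ℂ be holomorphic with ∂_x∂_y u + a·∂_x u + b·∂_y u + c·u = 0 on Ω. Define u₊ := ∂_y u + a·u and a₊ := a − (∂_y h)/h, b₊ := b, c₊ := c − ∂_x a + ∂_y b − b·(∂_y h)/h. Then ∂_x∂_y u₊ + a₊·∂_x u₊ + b₊·∂_y u₊ + c₊·u₊ = 0 on Ω. -/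
/-!
Since `M = (∂ₓ + b)(∂_y + a) - h`, the equation `M u = 0` says `(∂ₓ + b) u₊ = h u` on `Ω`.
Differentiating this in `y`, commuting `∂ₓ∂_y` (analyticity), and eliminating `∂_y u = u₊ - a u`
and `h u = ∂ₓ u₊ + b u₊` leaves `h · M₊ u₊ = u₊ · (h - ∂ₓ a - a b + c) = 0`.
-/

/-- Partial derivative with respect to the first coordinate of `ℂ × ℂ`. -/
noncomputable def dX (f : ℂ × ℂ → ℂ) : ℂ × ℂ → ℂ := fun z => fderiv ℂ f z (1, 0)

/-- Partial derivative with respect to the second coordinate of `ℂ × ℂ`. -/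
noncomputable def dY (f : ℂ × ℂ → ℂ) : ℂ × ℂ → ℂ := fun z => fderiv ℂ f z (0, 1)

section

variable {𝕜 E F : Type*} [NontriviallyNormedField 𝕜] [NormedAddCommGroup E] [NormedSpace 𝕜 E]
  [NormedAddCommGroup F] [NormedSpace 𝕜 F] [CompleteSpace F] {f : E → F} {z : E}

lemma fderiv_apply_fderiv_comm (hf : AnalyticAt 𝕜 f z) (v w : E) :
    fderiv 𝕜 (fun y => fderiv 𝕜 f y v) z w = fderiv 𝕜 (fun y => fderiv 𝕜 f y w) z v := by
  have hd : DifferentiableAt 𝕜 (fderiv 𝕜 f) z := hf.fderiv.differentiableAt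
  simp only [fderiv_clm_apply hd (differentiableAt_const _), fderiv_fun_const, Pi.zero_apply,
    ContinuousLinearMap.comp_zero, zero_add, ContinuousLinearMap.flip_apply]
  exact hf.contDiffAt.isSymmSndFDerivAt_of_omega w v

lemma AnalyticOnNhd.fderiv_apply {Ω : Set E} (hf : AnalyticOnNhd 𝕜 f Ω) (v : E) :
    AnalyticOnNhd 𝕜 (fun z => fderiv 𝕜 f z v) Ω :=
  fun z hz => ((ContinuousLinearMap.apply 𝕜 F v).analyticAt _).comp (hf.fderiv z hz)

end

section

variable {f g : ℂ × ℂ → ℂ} {z : ℂ × ℂ} {Ω : Set (ℂ × ℂ)}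

lemma dX_dY_comm (hf : AnalyticAt ℂ f z) : dX (dY f) z = dY (dX f) z :=
  fderiv_apply_fderiv_comm hf _ _

lemma AnalyticOnNhd.dX (hf : AnalyticOnNhd ℂ f Ω) : AnalyticOnNhd ℂ (dX f) Ω :=
  hf.fderiv_apply _

lemma AnalyticOnNhd.dY (hf : AnalyticOnNhd ℂ f Ω) : AnalyticOnNhd ℂ (dY f) Ω :=
  hf.fderiv_apply _

lemma dX_add (hf : DifferentiableAt ℂ f z) (hg : DifferentiableAt ℂ g z) :
    dX (fun w => f w + g w) z = dX f z + dX g z := by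
  simp [dX, fderiv_fun_add hf hg]

lemma dY_add (hf : DifferentiableAt ℂ f z) (hg : DifferentiableAt ℂ g z) :
    dY (fun w => f w + g w) z = dY f z + dY g z := by
  simp [dY, fderiv_fun_add hf hg]

lemma dX_mul (hf : DifferentiableAt ℂ f z) (hg : DifferentiableAt ℂ g z) :
    dX (fun w => f w * g w) z = f z * dX g z + g z * dX f z := by
  simp [dX, fderiv_fun_mul hf hg]

lemma dY_mul (hf : DifferentiableAt ℂ f z) (hg : DifferentiableAt ℂ g z) :
    dY (fun w => f w * g w) z = f z * dY g z + g z * dY f z := by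
  simp [dY, fderiv_fun_mul hf hg]

lemma Filter.EventuallyEq.dY_eq (hfg : f =ᶠ[nhds z] g) : dY f z = dY g z := by
  simp only [_root_.dY, hfg.fderiv_eq]

end

/-- The factorization `M = (∂ₓ + b)(∂_y + a) - h`, evaluated on a solution of `M u = 0`. -/
theorem dX_laplaceTransform_add_mul {a b c u : ℂ × ℂ → ℂ} {z : ℂ × ℂ} (ha : DifferentiableAt ℂ a z)
    (hu : DifferentiableAt ℂ u z) (hYu : DifferentiableAt ℂ (dY u) z)
    (hueq : dX (dY u) z + a z * dX u z + b z * dY u z + c z * u z = 0) :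
    dX (fun w => dY u w + a w * u w) z + b z * (dY u z + a z * u z) =
      (dX a z + a z * b z - c z) * u z := by
  rw [dX_add hYu (ha.fun_mul hu), dX_mul ha hu]
  linear_combination hueq

/-- Lemma 2.2 (Laplace transformation step): if `u` solves `Mu = 0` and the invariant
`h = ∂ₓa + ab − c` is nonvanishing, then `u₊ = ∂_y u + a·u` solves `M₊u₊ = 0` with
`a₊ = a − ∂_y log h`, `b₊ = b`, `c₊ = c − ∂ₓa + ∂_y b − b·∂_y log h`. -/
theorem stmt_1 (Ω : Set (ℂ × ℂ)) (hΩ : IsOpen Ω)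
    (a b c u : ℂ × ℂ → ℂ)
    (ha : AnalyticOnNhd ℂ a Ω) (hb : AnalyticOnNhd ℂ b Ω)
    (hc : AnalyticOnNhd ℂ c Ω) (hu : AnalyticOnNhd ℂ u Ω)
    (h : ℂ × ℂ → ℂ) (hh : h = fun z => dX a z + a z * b z - c z)
    (hne : ∀ z ∈ Ω, h z ≠ 0)
    (hueq : ∀ z ∈ Ω, dX (dY u) z + a z * dX u z + b z * dY u z + c z * u z = 0)
    (uplus aplus bplus cplus : ℂ × ℂ → ℂ)
    (hup : uplus = fun z => dY u z + a z * u z)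
    (hap : aplus = fun z => a z - dY h z / h z)
    (hbp : bplus = b)
    (hcp : cplus = fun z => c z - dX a z + dY b z - b z * (dY h z / h z)) :
    ∀ z ∈ Ω,
      dX (dY uplus) z + aplus z * dX uplus z + bplus z * dY uplus z + cplus z * uplus z = 0 := by
  subst aplus bplus cplus
  intro z hz
  have hU : AnalyticOnNhd ℂ uplus Ω :=
    hup ▸ fun w hw => (hu.dY w hw).add ((ha w hw).mul (hu w hw))
  have h_an : AnalyticOnNhd ℂ h Ω :=
    hh ▸ fun w hw => ((ha.dX w hw).add ((ha w hw).mul (hb w hw))).sub (hc w hw)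
  have factor : ∀ w ∈ Ω, dX uplus w + b w * uplus w = h w * u w := by
    intro w hw
    subst hup hh
    exact dX_laplaceTransform_add_mul (ha w hw).differentiableAt (hu w hw).differentiableAt
      (hu.dY w hw).differentiableAt (hueq w hw)
  have factor_dY : dY (dX uplus) z + (b z * dY uplus z + uplus z * dY b z) =
      h z * dY u z + u z * dY h z := by
    have := (Filter.eventuallyEq_of_mem (hΩ.mem_nhds hz) factor).dY_eq
    rwa [dY_add (hU.dX z hz).differentiableAt ((hb z hz).fun_mul (hU z hz)).differentiableAt,
      dY_mul (hb z hz).differentiableAt (hU z hz).differentiableAt,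
      dY_mul (h_an z hz).differentiableAt (hu z hz).differentiableAt] at this
  have comm : dX (dY uplus) z = dY (dX uplus) z := dX_dY_comm (hU z hz)
  have dY_u : dY u z = uplus z - a z * u z := by rw [hup]; ring
  have hhz : h z = dX a z + a z * b z - c z := by rw [hh]
  field_simp [hne z hz]
  linear_combination h z * comm + h z * factor_dY + h z ^ 2 * dY_u
    + (a z * h z - dY h z) * factor z hz + h z * uplus z * hhz
end

section
/- Let Ω ⊆ ℂ² be open, a, b, c : Ω → ℂ holomorphic, h := ∂_x a + a·b − c nonvanishing on Ω, and k := ∂_y b + a·b − c. Define a₊ := a − (∂_y h)/h, b₊ := b, c₊ := c − ∂_x a + ∂_y b − b·(∂_y h)/h, and the new invariants h₊ := ∂_x a₊ + a₊·b₊ − c₊ and k₊ := ∂_y b₊ + a₊·b₊ − c₊. Then k₊ = h on Ω, and h₊ satisfies the bilinear identity h²·h₊ = (2h − k)·h² − ( h·∂_x∂_y h − (∂_x h)(∂_y h) ) on Ω (equivalently, h₊ = 2h − k − ∂_x∂_y log h). -/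
/-! The only derivative of the correction term `∂_y h / h` that enters `h₊` is `∂ₓ a₊`, and the
quotient rule `h² ∂ₓ(∂_y h / h) = h ∂ₓ∂_y h − ∂_y h ∂ₓ h` turns it into the bilinear term; all the
rest is ring arithmetic in the values of `a, b, c` and their first derivatives at the point. -/

section QuotientRule

variable {𝕜 E : Type*} [NontriviallyNormedField 𝕜] [NormedAddCommGroup E] [NormedSpace 𝕜 E]
  {f g : E → 𝕜} {z : E}

theorem sq_mul_fderiv_fun_div_apply (hf : DifferentiableAt 𝕜 f z) (hg : DifferentiableAt 𝕜 g z)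
    (hz : g z ≠ 0) (v : E) :
    g z ^ 2 * fderiv 𝕜 (fun w => f w / g w) z v = g z * fderiv 𝕜 f z v - f z * fderiv 𝕜 g z v := by
  have hinv : HasFDerivAt (fun w => (g w)⁻¹) ((fderiv 𝕜 Inv.inv (g z)).comp (fderiv 𝕜 g z)) z :=
    (differentiableAt_inv hz).hasFDerivAt.comp z hg.hasFDerivAt
  simp only [div_eq_mul_inv]
  rw [fderiv_fun_mul hf hinv.differentiableAt, hinv.fderiv, fderiv_inv]
  simp only [add_apply, smul_apply, ContinuousLinearMap.comp_apply,
    ContinuousLinearMap.toSpanSingleton_apply, smul_eq_mul, mul_neg]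
  field_simp
  ring

end QuotientRule

section PartialDerivatives

variable {f g : ℂ × ℂ → ℂ} {z : ℂ × ℂ}

theorem AnalyticAt.dX (hf : AnalyticAt ℂ f z) : AnalyticAt ℂ (dX f) z :=
  (ContinuousLinearMap.apply ℂ ℂ ((1 : ℂ), (0 : ℂ))).analyticAt _ |>.comp hf.fderiv

theorem AnalyticAt.dY (hf : AnalyticAt ℂ f z) : AnalyticAt ℂ (dY f) z :=
  (ContinuousLinearMap.apply ℂ ℂ ((0 : ℂ), (1 : ℂ))).analyticAt _ |>.comp hf.fderiv

theorem dX_fun_sub (hf : DifferentiableAt ℂ f z) (hg : DifferentiableAt ℂ g z) :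
    dX (fun w => f w - g w) z = dX f z - dX g z := by
  simp [dX, fderiv_fun_sub hf hg]

theorem sq_mul_dX_fun_div (hf : DifferentiableAt ℂ f z) (hg : DifferentiableAt ℂ g z)
    (hz : g z ≠ 0) : g z ^ 2 * dX (fun w => f w / g w) z = g z * dX f z - f z * dX g z :=
  sq_mul_fderiv_fun_div_apply hf hg hz _

end PartialDerivatives

theorem stmt_2_general (Ω : Set (ℂ × ℂ))
    (a b c : ℂ × ℂ → ℂ)
    (ha : AnalyticOnNhd ℂ a Ω) (hb : AnalyticOnNhd ℂ b Ω)
    (hc : AnalyticOnNhd ℂ c Ω)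
    (h k : ℂ × ℂ → ℂ)
    (hh : h = fun z => dX a z + a z * b z - c z)
    (hk : k = fun z => dY b z + a z * b z - c z)
    (hne : ∀ z ∈ Ω, h z ≠ 0)
    (aplus bplus cplus hplus kplus : ℂ × ℂ → ℂ)
    (hap : aplus = fun z => a z - dY h z / h z)
    (hbp : bplus = b)
    (hcp : cplus = fun z => c z - dX a z + dY b z - b z * (dY h z / h z))
    (hhp : hplus = fun z => dX aplus z + aplus z * bplus z - cplus z)
    (hkp : kplus = fun z => dY bplus z + aplus z * bplus z - cplus z) :
    ∀ z ∈ Ω,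
      kplus z = h z ∧
      (h z)^2 * hplus z
        = (2 * h z - k z) * (h z)^2 - (h z * dX (dY h) z - dX h z * dY h z) := by
  intro z hz
  have hh_an : AnalyticAt ℂ h z :=
    hh ▸ (((ha z hz).dX.add ((ha z hz).mul (hb z hz))).sub (hc z hz))
  have hlog : h z ^ 2 * dX (fun w => dY h w / h w) z = h z * dX (dY h) z - dY h z * dX h z :=
    sq_mul_dX_fun_div hh_an.dY.differentiableAt hh_an.differentiableAt (hne z hz)
  have hXap : dX aplus z = dX a z - dX (fun w => dY h w / h w) z :=
    hap ▸ dX_fun_sub (ha z hz).differentiableAt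
      (hh_an.dY.fun_div hh_an (hne z hz)).differentiableAt
  have hhz : h z = dX a z + a z * b z - c z := by rw [hh]
  subst hap hbp hcp hhp hkp hk
  refine ⟨by rw [hhz]; ring, ?_⟩
  simp only [hXap]
  linear_combination -hlog - 2 * h z ^ 2 * hhz

/-- Lemma 2.2, invariant relation: for the Laplace transform `M₊` of `M`,
the new invariants satisfy `k₊ = h` and `h₊ = 2h − k − ∂ₓ∂_y log h`, the latter
expressed in the bilinear form `h²·h₊ = (2h − k)·h² − (h·∂ₓ∂_y h − (∂ₓh)(∂_y h))`. -/
theorem stmt_2 (Ω : Set (ℂ × ℂ)) (hΩ : IsOpen Ω)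
    (a b c : ℂ × ℂ → ℂ)
    (ha : AnalyticOnNhd ℂ a Ω) (hb : AnalyticOnNhd ℂ b Ω)
    (hc : AnalyticOnNhd ℂ c Ω)
    (h k : ℂ × ℂ → ℂ)
    (hh : h = fun z => dX a z + a z * b z - c z)
    (hk : k = fun z => dY b z + a z * b z - c z)
    (hne : ∀ z ∈ Ω, h z ≠ 0)
    (aplus bplus cplus hplus kplus : ℂ × ℂ → ℂ)
    (hap : aplus = fun z => a z - dY h z / h z)
    (hbp : bplus = b)
    (hcp : cplus = fun z => c z - dX a z + dY b z - b z * (dY h z / h z))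
    (hhp : hplus = fun z => dX aplus z + aplus z * bplus z - cplus z)
    (hkp : kplus = fun z => dY bplus z + aplus z * bplus z - cplus z) :
    ∀ z ∈ Ω,
      kplus z = h z ∧
      (h z)^2 * hplus z
        = (2 * h z - k z) * (h z)^2 - (h z * dX (dY h) z - dX h z * dY h z) :=
  stmt_2_general Ω a b c ha hb hc h k hh hk hne aplus bplus cplus hplus kplus hap hbp hcp hhp hkp
end

section
/- Let α, β ∈ ℂ and for each n ∈ ℤ define r_n : {(x,y) ∈ ℂ² : x ≠ y} → ℂ by r_n(x,y) = (α+n)(β−n+1)/(x−y)². Then for every n ∈ ℤ and every (x,y) with x ≠ y, r_n·∂_x∂_y r_n − (∂_x r_n)(∂_y r_n) = ( r_{n+1} − 2r_n + r_{n−1} )·r_n², that is, the family {r_n} solves the 2-dimensional Toda equation ∂_x∂_y log r_n = r_{n+1} − 2r_n + r_{n−1} in bilinear form. -/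
/-!
Every `r_n` is a function `g (x - y)` of the difference only, so `∂_x` acts on it as `d/dt`
and `∂_y` as `-d/dt`, and the bilinear Toda expression becomes `g'² - g g''` at `t = x - y`.
For `g = c t⁻²` this is `-2 c² t⁻⁶`, while the coefficients `c_n = (α + n)(β - n + 1)` are
quadratic in `n` with leading coefficient `-1`, so `c_{n+1} - 2 c_n + c_{n-1} = -2`.
-/

open ContinuousLinearMap in
theorem fderiv_comp_fst_sub_snd (g : ℂ → ℂ) (z : ℂ × ℂ) :
    fderiv ℂ (fun w : ℂ × ℂ => g (w.1 - w.2)) z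
      = deriv g (z.1 - z.2) • (fst ℂ ℂ ℂ - snd ℂ ℂ ℂ) := by
  by_cases hg : DifferentiableAt ℂ g (z.1 - z.2)
  · exact (hg.hasDerivAt.comp_hasFDerivAt z (hasFDerivAt_fst.sub hasFDerivAt_snd)).fderiv
  · have hf : ¬DifferentiableAt ℂ (fun w : ℂ × ℂ => g (w.1 - w.2)) z := fun hf => hg <| by
      -- `g` is the composite restricted to the line `t ↦ (t + z.2, z.2)`.
      have hline : DifferentiableAt ℂ (fun t : ℂ => (t + z.2, z.2)) (z.1 - z.2) := by fun_prop
      have hcomp := DifferentiableAt.comp (z.1 - z.2) (by simpa using hf) hline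
      simpa [Function.comp_def] using hcomp
    rw [fderiv_zero_of_not_differentiableAt hf, deriv_zero_of_not_differentiableAt hg]
    exact (zero_smul ℂ (fst ℂ ℂ ℂ - snd ℂ ℂ ℂ)).symm

theorem dX_comp_sub (g : ℂ → ℂ) :
    dX (fun w => g (w.1 - w.2)) = fun w => deriv g (w.1 - w.2) := by
  funext w
  simp [dX, fderiv_comp_fst_sub_snd]

theorem dY_comp_sub (g : ℂ → ℂ) :
    dY (fun w => g (w.1 - w.2)) = fun w => -deriv g (w.1 - w.2) := by
  funext w
  simp [dY, fderiv_comp_fst_sub_snd]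

theorem dX_dY_comp_sub (g : ℂ → ℂ) :
    dX (dY (fun w => g (w.1 - w.2))) = fun w => -deriv (deriv g) (w.1 - w.2) := by
  rw [dY_comp_sub, dX_comp_sub (fun t => -deriv g t), deriv.fun_neg']

theorem toda_bilinear_comp_sub (g : ℂ → ℂ) (z : ℂ × ℂ) :
    g (z.1 - z.2) * dX (dY (fun w => g (w.1 - w.2))) z
        - dX (fun w => g (w.1 - w.2)) z * dY (fun w => g (w.1 - w.2)) z
      = deriv g (z.1 - z.2) ^ 2 - g (z.1 - z.2) * deriv (deriv g) (z.1 - z.2) := by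
  rw [dX_dY_comp_sub, dX_comp_sub, dY_comp_sub]
  ring

theorem deriv_const_mul_zpow {𝕜 : Type*} [NontriviallyNormedField 𝕜] (c : 𝕜) (m : ℤ) :
    deriv (fun t : 𝕜 => c * t ^ m) = fun t => c * m * t ^ (m - 1) := by
  simp only [deriv_const_mul_field', deriv_zpow', mul_assoc]

/-- Proposition 2.13(3): the invariants `r_n(x,y) = (α+n)(β−n+1)/(x−y)²` of the Laplace
sequence of the Euler–Poisson–Darboux operator solve the 2-dimensional Toda equation
`∂ₓ∂_y log r_n = r_{n+1} − 2r_n + r_{n−1}` in bilinear form, off the diagonal `x = y`. -/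
theorem stmt_6 (α β : ℂ) (r : ℤ → ℂ × ℂ → ℂ)
    (hr : ∀ n : ℤ, r n = fun z => (α + n) * (β - n + 1) / (z.1 - z.2)^2) :
    ∀ n : ℤ, ∀ z : ℂ × ℂ, z.1 ≠ z.2 →
      r n z * dX (dY (r n)) z - dX (r n) z * dY (r n) z
        = (r (n+1) z - 2 * r n z + r (n-1) z) * (r n z)^2 := by
  intro n z _
  set g : ℤ → ℂ → ℂ := fun k t => (α + k) * (β - k + 1) * t ^ (-2 : ℤ)
  have hrg : ∀ k, r k = fun w => g k (w.1 - w.2) := fun k => by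
    simp [hr k, g, div_eq_mul_inv]
  rw [hrg n, toda_bilinear_comp_sub, hrg (n + 1), hrg (n - 1)]
  simp only [g]
  rw [deriv_const_mul_zpow, deriv_const_mul_zpow]
  norm_num
  field_simp
  ring
end

section
/- Let α, β ∈ ℂ, set p(n) := (α+n)(β−n+1) for n ∈ ℤ, and let B : ℤ → ℂ satisfy B(n+1)·B(n−1) = p(n)·B(n)² for all n ∈ ℤ. Let Ω := {(x,y) ∈ ℂ² : x − y ∈ ℂ∖ℝ_{≤0}} and define t_n : Ω → ℂ by t_n(x,y) = B(n)·(x−y)^{p(n)} (complex power). Then for all n ∈ ℤ, t_n·∂_x∂_y t_n − (∂_x t_n)(∂_y t_n) = t_{n+1}·t_{n−1} on Ω; that is, {t_n} is a solution of the 2-dimensional Toda–Hirota equation in bilinear form. -/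
open Complex Filter Topology

section PowerOfDifference

variable (b c : ℂ) {z : ℂ × ℂ}

theorem hasFDerivAt_mul_cpow_sub (hz : z.1 - z.2 ∈ slitPlane) :
    HasFDerivAt (fun w : ℂ × ℂ => b * (w.1 - w.2) ^ c)
      ((b * c * (z.1 - z.2) ^ (c - 1)) •
        (ContinuousLinearMap.fst ℂ ℂ ℂ - ContinuousLinearMap.snd ℂ ℂ ℂ)) z := by
  have hsub : HasFDerivAt (fun w : ℂ × ℂ => w.1 - w.2)
      (ContinuousLinearMap.fst ℂ ℂ ℂ - ContinuousLinearMap.snd ℂ ℂ ℂ) z :=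
    hasFDerivAt_fst.sub hasFDerivAt_snd
  have hpow := (hasStrictDerivAt_cpow_const (c := c) hz).hasDerivAt.comp_hasFDerivAt z hsub
  simpa [smul_smul, mul_assoc] using hpow.const_mul b

theorem dX_mul_cpow_sub (hz : z.1 - z.2 ∈ slitPlane) :
    dX (fun w : ℂ × ℂ => b * (w.1 - w.2) ^ c) z = b * c * (z.1 - z.2) ^ (c - 1) := by
  simp [dX, (hasFDerivAt_mul_cpow_sub b c hz).fderiv]

theorem dY_mul_cpow_sub (hz : z.1 - z.2 ∈ slitPlane) :
    dY (fun w : ℂ × ℂ => b * (w.1 - w.2) ^ c) z = -(b * c) * (z.1 - z.2) ^ (c - 1) := by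
  simp [dY, (hasFDerivAt_mul_cpow_sub b c hz).fderiv]

theorem dY_mul_cpow_sub_eventuallyEq (hz : z.1 - z.2 ∈ slitPlane) :
    dY (fun w : ℂ × ℂ => b * (w.1 - w.2) ^ c)
      =ᶠ[𝓝 z] fun w => -(b * c) * (w.1 - w.2) ^ (c - 1) := by
  have hopen : IsOpen {w : ℂ × ℂ | w.1 - w.2 ∈ slitPlane} :=
    isOpen_slitPlane.preimage (continuous_fst.sub continuous_snd)
  filter_upwards [hopen.mem_nhds hz] with w hw
  exact dY_mul_cpow_sub b c hw

theorem dX_dY_mul_cpow_sub (hz : z.1 - z.2 ∈ slitPlane) :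
    dX (dY (fun w : ℂ × ℂ => b * (w.1 - w.2) ^ c)) z
      = -(b * c) * (c - 1) * (z.1 - z.2) ^ (c - 1 - 1) := by
  have hlocal := (dY_mul_cpow_sub_eventuallyEq b c hz).fderiv_eq (𝕜 := ℂ)
  have hdX := dX_mul_cpow_sub (-(b * c)) (c - 1) hz
  simp only [dX] at hdX ⊢
  rw [hlocal, hdX]

theorem hirota_mul_cpow_sub (hz : z.1 - z.2 ∈ slitPlane) :
    b * (z.1 - z.2) ^ c * dX (dY (fun w : ℂ × ℂ => b * (w.1 - w.2) ^ c)) z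
        - dX (fun w : ℂ × ℂ => b * (w.1 - w.2) ^ c) z
          * dY (fun w : ℂ × ℂ => b * (w.1 - w.2) ^ c) z
      = c * b ^ 2 * (z.1 - z.2) ^ (2 * c - 2) := by
  rw [dX_dY_mul_cpow_sub b c hz, dX_mul_cpow_sub b c hz, dY_mul_cpow_sub b c hz]
  have hw : z.1 - z.2 ≠ 0 := slitPlane_ne_zero hz
  have hdiag : (z.1 - z.2) ^ c * (z.1 - z.2) ^ (c - 1 - 1) = (z.1 - z.2) ^ (2 * c - 2) := by
    rw [← cpow_add _ _ hw]; ring_nf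
  have hsq : (z.1 - z.2) ^ (c - 1) * (z.1 - z.2) ^ (c - 1) = (z.1 - z.2) ^ (2 * c - 2) := by
    rw [← cpow_add _ _ hw]; ring_nf
  linear_combination (-(b ^ 2 * c * (c - 1))) * hdiag + b ^ 2 * c ^ 2 * hsq

end PowerOfDifference

/-- Proposition 2.14: the seed solution of the 2-dimensional Toda–Hirota equation
arising from the Euler–Poisson–Darboux operator. With `p(n) = (α+n)(β−n+1)` and
`B(n+1)B(n−1) = p(n)B(n)²`, the family `t_n(x,y) = B(n)·(x−y)^{p(n)}` satisfies
`t_n·∂ₓ∂_y t_n − (∂ₓt_n)(∂_y t_n) = t_{n+1}·t_{n−1}` on the region where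
`x − y` lies in the slit plane `ℂ∖ℝ_{≤0}`. -/
theorem stmt_7 (α β : ℂ) (p : ℤ → ℂ) (hp : ∀ n : ℤ, p n = (α + n) * (β - n + 1))
    (B : ℤ → ℂ) (hB : ∀ n : ℤ, B (n+1) * B (n-1) = p n * (B n)^2)
    (t : ℤ → ℂ × ℂ → ℂ)
    (ht : ∀ n : ℤ, t n = fun z => B n * (z.1 - z.2) ^ (p n)) :
    ∀ n : ℤ, ∀ z : ℂ × ℂ, z.1 - z.2 ∈ Complex.slitPlane →
      t n z * dX (dY (t n)) z - dX (t n) z * dY (t n) z = t (n+1) z * t (n-1) z := by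
  intro n z hz
  have hsecond : p (n + 1) + p (n - 1) = 2 * p n - 2 := by
    simp only [hp]; push_cast; ring
  rw [ht n, hirota_mul_cpow_sub (B n) (p n) hz, ht (n + 1), ht (n - 1), ← hsecond,
    cpow_add _ _ (slitPlane_ne_zero hz)]
  linear_combination (z.1 - z.2) ^ p (n + 1) * (z.1 - z.2) ^ p (n - 1) * (hB n).symm
end

section
/- Let N ≥ 2, α ∈ ℂ^N, u ∈ ℂ, and let U be the open set of matrices z ∈ Mat(2×N, ℂ) such that ℓ_j(z) := z_{1,j} + u·z_{2,j} ∈ ℂ∖ℝ_{≤0} for every 1 ≤ j ≤ N. Define ψ : U → ℂ by ψ(z) = ∏_{j=1}^N ℓ_j(z)^{α_j} (complex powers). Then for all 1 ≤ p ≠ q ≤ N and all z ∈ U, ∂_{1,p}∂_{2,q} ψ(z) = ∂_{2,p}∂_{1,q} ψ(z), where ∂_{i,p} denotes the partial derivative with respect to the matrix entry z_{i,p}. -/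
/-!
Row `i` enters `ℓ_j(z) = z_{0,j} + u z_{1,j}` with the coefficient `c_i = ![1, u] i`, so on the
slit domain `∂_{i,p} ∏_j ℓ_j^{β_j} = c_i β_p ∏_j ℓ_j^{β_j - δ_{jp}}`. Applying this twice,
`∂_{i,p} ∂_{k,q} ψ` is `c_i c_k` times an expression that does not depend on the rows `i, k`,
hence it is symmetric under exchanging them.
-/

/-- Partial derivative of a function of a `2 × N` complex matrix (encoded as
`Fin 2 → Fin N → ℂ`) with respect to the entry in row `i`, column `p`. -/
noncomputable def pdm {N : ℕ} (i : Fin 2) (p : Fin N) (f : (Fin 2 → Fin N → ℂ) → ℂ) :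
    (Fin 2 → Fin N → ℂ) → ℂ :=
  fun z => fderiv ℂ f z (Pi.single i (Pi.single p (1 : ℂ)))

open Filter Topology

namespace Gelfand

variable {N : ℕ}

noncomputable def linearForm (u : ℂ) (j : Fin N) : (Fin 2 → Fin N → ℂ) →L[ℂ] ℂ :=
  let row (i : Fin 2) : (Fin 2 → Fin N → ℂ) →L[ℂ] Fin N → ℂ := ContinuousLinearMap.proj i
  (ContinuousLinearMap.proj j).comp (row 0) + u • (ContinuousLinearMap.proj j).comp (row 1)

lemma linearForm_apply (u : ℂ) (j : Fin N) (z : Fin 2 → Fin N → ℂ) :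
    linearForm u j z = z 0 j + u * z 1 j := by
  simp [linearForm]

lemma linearForm_single (u : ℂ) (j : Fin N) (i : Fin 2) (p : Fin N) :
    linearForm u j (Pi.single i (Pi.single p 1)) = if j = p then ![1, u] i else 0 := by
  fin_cases i <;> by_cases h : j = p <;> simp [linearForm_apply, h]

noncomputable def integrand (u : ℂ) (β : Fin N → ℂ) (z : Fin 2 → Fin N → ℂ) : ℂ :=
  ∏ j, (z 0 j + u * z 1 j) ^ β j

def slitDomain (N : ℕ) (u : ℂ) : Set (Fin 2 → Fin N → ℂ) :=
  {z | ∀ j, z 0 j + u * z 1 j ∈ Complex.slitPlane}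

lemma isOpen_slitDomain (u : ℂ) : IsOpen (slitDomain N u) := by
  simp only [slitDomain, Set.ofPred_forall]
  exact isOpen_iInter_of_finite fun j => Complex.isOpen_slitPlane.preimage (by fun_prop)

lemma hasFDerivAt_integrand {u : ℂ} (β : Fin N → ℂ) {z : Fin 2 → Fin N → ℂ}
    (hz : z ∈ slitDomain N u) :
    HasFDerivAt (integrand u β)
      (∑ j, (∏ k ∈ Finset.univ.erase j, (z 0 k + u * z 1 k) ^ β k) •
        (β j * (z 0 j + u * z 1 j) ^ (β j - 1)) • linearForm u j) z := by
  refine HasFDerivAt.finsetProd fun j _ => ?_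
  have hℓ : HasFDerivAt (fun w : Fin 2 → Fin N → ℂ => w 0 j + u * w 1 j) (linearForm u j) z :=
    (linearForm u j).hasFDerivAt.congr_of_eventuallyEq
      (.of_forall fun w => (linearForm_apply u j w).symm)
  exact (Complex.hasStrictDerivAt_cpow_const (hz j)).hasDerivAt.comp_hasFDerivAt z hℓ

lemma pdm_integrand {u : ℂ} (β : Fin N → ℂ) (i : Fin 2) (p : Fin N)
    {z : Fin 2 → Fin N → ℂ} (hz : z ∈ slitDomain N u) :
    pdm i p (integrand u β) z
      = ![1, u] i * β p * integrand u (Function.update β p (β p - 1)) z := by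
  have hlower : integrand u (Function.update β p (β p - 1)) z
      = (z 0 p + u * z 1 p) ^ (β p - 1) *
          ∏ k ∈ Finset.univ.erase p, (z 0 k + u * z 1 k) ^ β k := by
    rw [integrand, ← Finset.mul_prod_erase _ _ (Finset.mem_univ p), Function.update_self]
    congr 1
    exact Finset.prod_congr rfl fun k hk => by rw [Function.update_of_ne (Finset.ne_of_mem_erase hk)]
  rw [pdm, (hasFDerivAt_integrand β hz).fderiv, sum_apply,
    Finset.sum_eq_single p (fun j _ hj => by simp [linearForm_single, hj]) (by simp), hlower]
  simp only [smul_apply, linearForm_single, if_pos, smul_eq_mul]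
  ring

lemma _root_.Filter.EventuallyEq.pdm_eq {f g : (Fin 2 → Fin N → ℂ) → ℂ} {z : Fin 2 → Fin N → ℂ}
    (h : f =ᶠ[𝓝 z] g) (i : Fin 2) (p : Fin N) : pdm i p f z = pdm i p g z := by
  simp only [pdm, h.fderiv_eq]

lemma pdm_const_smul (c : ℂ) (f : (Fin 2 → Fin N → ℂ) → ℂ) (i : Fin 2) (p : Fin N) :
    pdm i p (c • f) = c • pdm i p f := by
  ext z
  simp [pdm, fderiv_const_smul_field]

lemma pdm_pdm_integrand {u : ℂ} (α : Fin N → ℂ) (i k : Fin 2) (p q : Fin N)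
    {z : Fin 2 → Fin N → ℂ} (hz : z ∈ slitDomain N u) :
    let β := Function.update α q (α q - 1)
    pdm i p (pdm k q (integrand u α)) z
      = ![1, u] i * ![1, u] k * α q * β p * integrand u (Function.update β p (β p - 1)) z := by
  intro β
  have hfirst : pdm k q (integrand u α) =ᶠ[𝓝 z] (![1, u] k * α q) • integrand u β :=
    eventually_of_mem ((isOpen_slitDomain u).mem_nhds hz) fun w hw => pdm_integrand α k q hw
  rw [hfirst.pdm_eq, pdm_const_smul, Pi.smul_apply, pdm_integrand β i p hz, smul_eq_mul]
  ring

end Gelfand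

open Gelfand in
theorem stmt_8_general {N : ℕ} (α : Fin N → ℂ) (u : ℂ)
    (ψ : (Fin 2 → Fin N → ℂ) → ℂ)
    (hψ : ψ = fun z => ∏ j, (z 0 j + u * z 1 j) ^ (α j)) :
    ∀ p q : Fin N, p ≠ q → ∀ z : Fin 2 → Fin N → ℂ,
      (∀ j, z 0 j + u * z 1 j ∈ Complex.slitPlane) →
      pdm 0 p (pdm 1 q ψ) z = pdm 1 p (pdm 0 q ψ) z := by
  intro p q _ z hz
  have hψ' : ψ = integrand u α := hψ
  rw [hψ', pdm_pdm_integrand α 0 1 p q hz, pdm_pdm_integrand α 1 0 p q hz]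
  ring

/-- Proposition 3.3 (pointwise version): the integrand
`ψ(z) = ∏_j (z_{1,j} + u·z_{2,j})^{α_j}` of the Gelfand hypergeometric function satisfies
the Gelfand hypergeometric equation `□_{p,q}ψ = (∂_{1,p}∂_{2,q} − ∂_{2,p}∂_{1,q})ψ = 0`
on the open set where each linear form lies in the slit plane. -/
theorem stmt_8 {N : ℕ} (hN : 2 ≤ N) (α : Fin N → ℂ) (u : ℂ)
    (ψ : (Fin 2 → Fin N → ℂ) → ℂ)
    (hψ : ψ = fun z => ∏ j, (z 0 j + u * z 1 j) ^ (α j)) :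
    ∀ p q : Fin N, p ≠ q → ∀ z : Fin 2 → Fin N → ℂ,
      (∀ j, z 0 j + u * z 1 j ∈ Complex.slitPlane) →
      pdm 0 p (pdm 1 q ψ) z = pdm 1 p (pdm 0 q ψ) z :=
  stmt_8_general α u ψ hψ
end

section
/- Let N ≥ 2, α ∈ ℂ^N, u ∈ ℂ, and let U be the open set of z ∈ Mat(2×N, ℂ) with ℓ_j(z) := z_{1,j} + u·z_{2,j} ∈ ℂ∖ℝ_{≤0} for all j. For β ∈ ℂ^N write ψ_β(z) = ∏_{j=1}^N ℓ_j(z)^{β_j}. Then for all 1 ≤ p ≠ q ≤ N and z ∈ U, the contiguity relation z_{1,p}·∂_{1,q} ψ_α(z) + z_{2,p}·∂_{2,q} ψ_α(z) = α_q · ψ_{α + e_p − e_q}(z) holds, where e_p ∈ ℂ^N is the p-th standard unit vector and ∂_{i,q} is the partial derivative with respect to the entry z_{i,q}. -/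
open Finset Complex

section ProdCpow

variable {ι E : Type*} [Fintype ι] [DecidableEq ι] [NormedAddCommGroup E] [NormedSpace ℂ E]

theorem hasFDerivAt_prod_cpow (ℓ : ι → E →L[ℂ] ℂ) (a : ι → ℂ) {z : E}
    (hz : ∀ j, ℓ j z ∈ slitPlane) :
    HasFDerivAt (fun z => ∏ j, ℓ j z ^ a j)
      ((∏ j, ℓ j z ^ a j) • ∑ j, (a j / ℓ j z) • ℓ j) z := by
  have hfac : ∀ j ∈ (univ : Finset ι), HasFDerivAt (fun z => ℓ j z ^ a j)
      ((a j * ℓ j z ^ (a j - 1)) • ℓ j) z := fun j _ =>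
    (hasStrictDerivAt_cpow_const (hz j)).hasDerivAt.comp_hasFDerivAt z (ℓ j).hasFDerivAt
  refine (HasFDerivAt.finsetProd hfac).congr_fderiv ?_
  rw [smul_sum]
  refine sum_congr rfl fun j _ => ?_
  have hj : ℓ j z ≠ 0 := slitPlane_ne_zero (hz j)
  rw [smul_smul, smul_smul, cpow_sub _ _ hj, cpow_one,
    ← mul_prod_erase univ (fun j => ℓ j z ^ a j) (mem_univ j)]
  congr 1
  field_simp

theorem prod_cpow_add_single (w : ι → ℂ) (a : ι → ℂ) {p : ι} (hp : w p ≠ 0) (c : ℂ) :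
    ∏ j, w j ^ (a + Pi.single p c : ι → ℂ) j = w p ^ c * ∏ j, w j ^ a j := by
  rw [← mul_prod_erase univ _ (mem_univ p), ← mul_prod_erase univ (fun j => w j ^ a j)
    (mem_univ p)]
  have hrest : ∀ j ∈ univ.erase p, w j ^ (a + Pi.single p c : ι → ℂ) j = w j ^ a j :=
    fun j hj => by rw [Pi.add_apply, Pi.single_eq_of_ne (ne_of_mem_erase hj), add_zero]
  rw [prod_congr rfl hrest, Pi.add_apply, Pi.single_eq_same, cpow_add _ _ hp]
  ring

theorem prod_cpow_mul_sum_single (w a : ι → ℂ) (hw : ∀ j, w j ≠ 0) (p q : ι) :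
    (∏ j, w j ^ a j) * ∑ j, a j / w j * (Pi.single q (w p) : ι → ℂ) j
      = a q * ∏ j, w j ^ (a + Pi.single p 1 - Pi.single q 1 : ι → ℂ) j := by
  have hsum : ∑ j, a j / w j * (Pi.single q (w p) : ι → ℂ) j = a q / w q * w p := by
    simp only [Pi.single_apply, mul_ite, mul_zero, sum_ite_eq', mem_univ, if_true]
  rw [hsum, sub_eq_add_neg, ← Pi.single_neg, prod_cpow_add_single _ _ (hw q),
    prod_cpow_add_single _ _ (hw p), cpow_neg_one, cpow_one]
  field_simp [hw q]

end ProdCpow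

section Contiguity

variable {N : ℕ}

noncomputable def columnForm (u : ℂ) (j : Fin N) : (Fin 2 → Fin N → ℂ) →L[ℂ] ℂ :=
  (ContinuousLinearMap.proj j).comp
    (ContinuousLinearMap.proj 0 + u • ContinuousLinearMap.proj 1 :
      (Fin 2 → Fin N → ℂ) →L[ℂ] Fin N → ℂ)

theorem columnForm_apply (u : ℂ) (j : Fin N) (z : Fin 2 → Fin N → ℂ) :
    columnForm u j z = z 0 j + u * z 1 j := rfl

theorem columnForm_single_column (u : ℂ) (j p q : Fin N) (z : Fin 2 → Fin N → ℂ) :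
    columnForm u j (fun i => Pi.single q (z i p))
      = (Pi.single q (columnForm u p z) : Fin N → ℂ) j := by
  rw [columnForm_apply, columnForm_apply]
  by_cases hj : j = q
  · subst hj; simp only [Pi.single_eq_same]
  · simp only [Pi.single_eq_of_ne hj, mul_zero, add_zero]

theorem mul_pdm_add_mul_pdm (f : (Fin 2 → Fin N → ℂ) → ℂ) (p q : Fin N)
    (z : Fin 2 → Fin N → ℂ) :
    z 0 p * pdm 0 q f z + z 1 p * pdm 1 q f z
      = fderiv ℂ f z (fun i => (Pi.single q (z i p) : Fin N → ℂ)) := by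
  simp only [pdm, ← smul_eq_mul, ← map_smul, ← map_add]
  congr 1
  ext i j
  fin_cases i <;> by_cases hj : j = q <;> simp [hj]

end Contiguity

theorem stmt_9_general {N : ℕ} (α : Fin N → ℂ) (u : ℂ)
    (ψ : (Fin N → ℂ) → (Fin 2 → Fin N → ℂ) → ℂ)
    (hψ : ∀ β : Fin N → ℂ, ψ β = fun z => ∏ j, (z 0 j + u * z 1 j) ^ (β j)) :
    ∀ p q : Fin N, p ≠ q → ∀ z : Fin 2 → Fin N → ℂ,
      (∀ j, z 0 j + u * z 1 j ∈ Complex.slitPlane) →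
      z 0 p * pdm 0 q (ψ α) z + z 1 p * pdm 1 q (ψ α) z
        = α q * ψ (α + Pi.single p 1 - Pi.single q 1) z := by
  intro p q _ z hz
  have hψ' : ∀ β, ψ β = fun z => ∏ j, columnForm u j z ^ β j := hψ
  rw [mul_pdm_add_mul_pdm, hψ' α, (hasFDerivAt_prod_cpow _ α hz).fderiv, hψ']
  simp only [smul_apply, _root_.sum_apply, smul_eq_mul, columnForm_single_column]
  exact prod_cpow_mul_sum_single (fun j => columnForm u j z) α
    (fun j => slitPlane_ne_zero (hz j)) p q

/-- Proposition 3.4 (pointwise version): the integrand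
`ψ_β(z) = ∏_j (z_{1,j} + u·z_{2,j})^{β_j}` of the Gelfand hypergeometric function satisfies
the contiguity relation `L_{p,q}ψ_α = z_{1,p}∂_{1,q}ψ_α + z_{2,p}∂_{2,q}ψ_α
= α_q·ψ_{α+e_p−e_q}` on the open set where each linear form lies in the slit plane. -/
theorem stmt_9 {N : ℕ} (hN : 2 ≤ N) (α : Fin N → ℂ) (u : ℂ)
    (ψ : (Fin N → ℂ) → (Fin 2 → Fin N → ℂ) → ℂ)
    (hψ : ∀ β : Fin N → ℂ, ψ β = fun z => ∏ j, (z 0 j + u * z 1 j) ^ (β j)) :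
    ∀ p q : Fin N, p ≠ q → ∀ z : Fin 2 → Fin N → ℂ,
      (∀ j, z 0 j + u * z 1 j ∈ Complex.slitPlane) →
      z 0 p * pdm 0 q (ψ α) z + z 1 p * pdm 1 q (ψ α) z
        = α q * ψ (α + Pi.single p 1 - Pi.single q 1) z :=
  stmt_9_general α u ψ hψ
end

section
/- Let N ≥ 2, α ∈ ℂ^N, Ω ⊆ ℂ^N open, and Φ : Ω → ℂ holomorphic. Let Z' be the open set of z ∈ Mat(2×N, ℂ) with z_{2,j} ∈ ℂ∖ℝ_{≤0} for all j and x(z) := (z_{1,1}/z_{2,1}, …, z_{1,N}/z_{2,N}) ∈ Ω. Define F : Z' → ℂ by F(z) = (∏_{j=1}^N z_{2,j}^{α_j})·Φ(x(z)). Then for all 1 ≤ p ≠ q ≤ N and z ∈ Z': z_{2,p}·z_{2,q}·( ∂_{1,p}∂_{2,q}F(z) − ∂_{2,p}∂_{1,q}F(z) ) = (∏_{j=1}^N z_{2,j}^{α_j}) · [ (x_p − x_q)·∂_p∂_q Φ + α_q·∂_p Φ − α_p·∂_q Φ ](x(z)), where ∂_p = ∂/∂x_p and x = x(z). In particular □_{p,q}F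 = 0 at z if and only if Φ satisfies the Euler–Poisson–Darboux equation (x_p − x_q)∂_p∂_qΦ + α_q∂_pΦ − α_p∂_qΦ = 0 at x(z). -/
noncomputable def pder {N : ℕ} (p : Fin N) (f : (Fin N → ℂ) → ℂ) : (Fin N → ℂ) → ℂ :=
  fun x => fderiv ℂ f x (Pi.single p (1 : ℂ))

/-!
Write `F = P_α · (Φ ∘ x)` with `P_α(z) = ∏ⱼ z_{2,j}^{α_j}`. A first derivative of such a lift is
again a lift, of weight `α - e_p`: `∂_{1,p}F` lifts `∂_pΦ` and `∂_{2,p}F` lifts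
`α_p Φ - x_p ∂_pΦ`, the factor `z_{2,p}⁻¹` produced by the chain rule being absorbed into the
weight. Applying this twice, both terms of `□_{p,q}F` become lifts of weight `α - e_p - e_q`,
and since `∂_p x_q = 0` for `p ≠ q` their difference lifts the Euler–Poisson–Darboux operator
applied to `Φ`. Multiplying by `z_{2,p} z_{2,q}` restores the weight `α`, and `P_α` never
vanishes on the slit plane.
-/

open Complex Finset Filter Topology

namespace GelfandReduction

variable {N : ℕ}

noncomputable def entry (i : Fin 2) (j : Fin N) : (Fin 2 → Fin N → ℂ) →L[ℂ] ℂ :=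
  (ContinuousLinearMap.proj j : (Fin N → ℂ) →L[ℂ] ℂ).comp
    (ContinuousLinearMap.proj i : (Fin 2 → Fin N → ℂ) →L[ℂ] (Fin N → ℂ))

@[simp]
lemma entry_apply (i : Fin 2) (j : Fin N) (w : Fin 2 → Fin N → ℂ) : entry i j w = w i j := rfl

-- The paper's `x(z)`. Rows are indexed from `0`, so `z 1 j` is the paper's `z_{2,j}`.
noncomputable def ratioCoords (z : Fin 2 → Fin N → ℂ) : Fin N → ℂ := fun j => z 0 j / z 1 j

noncomputable def torusWeight (α : Fin N → ℂ) (z : Fin 2 → Fin N → ℂ) : ℂ := ∏ j, z 1 j ^ α j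

noncomputable def cartanLift (α : Fin N → ℂ) (g : (Fin N → ℂ) → ℂ) :
    (Fin 2 → Fin N → ℂ) → ℂ :=
  fun z => torusWeight α z * g (ratioCoords z)

noncomputable def eulerPoissonDarboux (α : Fin N → ℂ) (p q : Fin N) (Φ : (Fin N → ℂ) → ℂ)
    (x : Fin N → ℂ) : ℂ :=
  (x p - x q) * pder p (pder q Φ) x + α q * pder p Φ x - α p * pder q Φ x

lemma torusWeight_ne_zero (α : Fin N → ℂ) {z : Fin 2 → Fin N → ℂ} (hz : ∀ j, z 1 j ≠ 0) :
    torusWeight α z ≠ 0 :=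
  prod_ne_zero_iff.2 fun j _ => by simp [cpow_eq_zero_iff, hz j]

lemma torusWeight_eq_mul_prod_erase (α : Fin N → ℂ) (z : Fin 2 → Fin N → ℂ) (p : Fin N) :
    torusWeight α z = z 1 p ^ α p * ∏ j ∈ univ.erase p, z 1 j ^ α j :=
  (mul_prod_erase _ _ (mem_univ p)).symm

lemma prod_erase_cpow_sub_single (α w : Fin N → ℂ) (p : Fin N) :
    ∏ j ∈ univ.erase p, w j ^ (α - Pi.single p 1 : Fin N → ℂ) j = ∏ j ∈ univ.erase p, w j ^ α j :=
  prod_congr rfl fun j hj => by simp [ne_of_mem_erase hj]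

lemma torusWeight_sub_single (α : Fin N → ℂ) (z : Fin 2 → Fin N → ℂ) (p : Fin N)
    (hp : z 1 p ≠ 0) :
    torusWeight (α - Pi.single p 1) z = (z 1 p)⁻¹ * torusWeight α z := by
  rw [torusWeight_eq_mul_prod_erase _ _ p, torusWeight_eq_mul_prod_erase _ _ p,
    prod_erase_cpow_sub_single]
  simp [cpow_sub _ _ hp, div_eq_inv_mul, mul_assoc]

lemma hasFDerivAt_torusWeight (α : Fin N → ℂ) {z : Fin 2 → Fin N → ℂ}
    (hz : ∀ j, z 1 j ∈ slitPlane) :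
    HasFDerivAt (torusWeight α)
      (∑ i, (∏ j ∈ univ.erase i, z 1 j ^ α j) • (α i * z 1 i ^ (α i - 1)) • entry 1 i) z :=
  HasFDerivAt.finsetProd fun i _ => by
    exact (hasStrictDerivAt_cpow_const (hz i)).hasDerivAt.comp_hasFDerivAt z
      (entry 1 i).hasFDerivAt

lemma fderiv_torusWeight_single_zero (α : Fin N → ℂ) {z : Fin 2 → Fin N → ℂ}
    (hz : ∀ j, z 1 j ∈ slitPlane) (p : Fin N) :
    fderiv ℂ (torusWeight α) z (Pi.single 0 (Pi.single p 1)) = 0 := by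
  simp [(hasFDerivAt_torusWeight α hz).fderiv]

lemma fderiv_torusWeight_single_one (α : Fin N → ℂ) {z : Fin 2 → Fin N → ℂ}
    (hz : ∀ j, z 1 j ∈ slitPlane) (p : Fin N) :
    fderiv ℂ (torusWeight α) z (Pi.single 1 (Pi.single p 1))
      = α p * torusWeight (α - Pi.single p 1) z := by
  rw [(hasFDerivAt_torusWeight α hz).fderiv, torusWeight_eq_mul_prod_erase _ _ p,
    prod_erase_cpow_sub_single]
  simp only [_root_.sum_apply, smul_apply, entry_apply, Pi.single_eq_same, Pi.single_apply,
    smul_eq_mul, mul_ite, mul_one, mul_zero, sum_ite_eq', mem_univ, if_true, Pi.sub_apply]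
  ring

lemma hasFDerivAt_ratioCoords {z : Fin 2 → Fin N → ℂ} (hz : ∀ j, z 1 j ≠ 0) :
    HasFDerivAt ratioCoords
      (ContinuousLinearMap.pi fun j =>
        (z 1 j)⁻¹ • entry 0 j - (ratioCoords z j * (z 1 j)⁻¹) • entry 1 j) z := by
  refine hasFDerivAt_pi.2 fun j => ?_
  have hinv : HasFDerivAt (fun w : Fin 2 → Fin N → ℂ => (w 1 j)⁻¹)
      (-(z 1 j ^ 2)⁻¹ • entry 1 j) z :=
    (hasDerivAt_inv (hz j)).comp_hasFDerivAt z (entry 1 j).hasFDerivAt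
  have hderiv : (entry 0 j) z • (-(z 1 j ^ 2)⁻¹ • entry 1 j) + (z 1 j)⁻¹ • entry 0 j
      = (z 1 j)⁻¹ • entry 0 j - (ratioCoords z j * (z 1 j)⁻¹) • entry 1 j := by
    ext w
    simp only [add_apply, smul_apply, smul_eq_mul, neg_mul, mul_neg, ratioCoords,
      sub_apply, entry_apply]
    ring
  exact ((entry 0 j).hasFDerivAt.mul hinv).congr_fderiv hderiv

lemma fderiv_ratioCoords_single_zero {z : Fin 2 → Fin N → ℂ} (hz : ∀ j, z 1 j ≠ 0)
    (p : Fin N) :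
    fderiv ℂ ratioCoords z (Pi.single 0 (Pi.single p 1)) = Pi.single p (z 1 p)⁻¹ := by
  ext j
  by_cases h : j = p <;> simp [(hasFDerivAt_ratioCoords hz).fderiv, h]

lemma fderiv_ratioCoords_single_one {z : Fin 2 → Fin N → ℂ} (hz : ∀ j, z 1 j ≠ 0)
    (p : Fin N) :
    fderiv ℂ ratioCoords z (Pi.single 1 (Pi.single p 1))
      = Pi.single p (-(ratioCoords z p * (z 1 p)⁻¹)) := by
  ext j
  by_cases h : j = p <;> simp [(hasFDerivAt_ratioCoords hz).fderiv, h]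

lemma fderiv_apply_single (g : (Fin N → ℂ) → ℂ) (x : Fin N → ℂ) (p : Fin N) (c : ℂ) :
    fderiv ℂ g x (Pi.single p c) = c * pder p g x := by
  rw [pder, ← smul_eq_mul, ← map_smul, ← Pi.single_smul, smul_eq_mul, mul_one]

lemma _root_.AnalyticOnNhd.pder {g : (Fin N → ℂ) → ℂ} {s : Set (Fin N → ℂ)}
    (hg : AnalyticOnNhd ℂ g s) (p : Fin N) : AnalyticOnNhd ℂ (pder p g) s :=
  fun x hx => by
    exact ((ContinuousLinearMap.apply ℂ ℂ (Pi.single p (1 : ℂ))).analyticAt _).comp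
      (hg.fderiv x hx)

lemma pder_const_mul_sub_coord_mul {g h : (Fin N → ℂ) → ℂ} {x : Fin N → ℂ}
    (hg : DifferentiableAt ℂ g x) (hh : DifferentiableAt ℂ h x) (c : ℂ) {p q : Fin N}
    (hpq : p ≠ q) :
    pder p (fun y => c * g y - y q * h y) x = c * pder p g x - x q * pder p h x := by
  have hderiv : HasFDerivAt (fun y => c * g y - y q * h y) _ x :=
    (hg.hasFDerivAt.const_mul c).sub ((hasFDerivAt_apply q x).mul hh.hasFDerivAt)
  simp [pder, hderiv.fderiv, hpq]

lemma pdm_congr_of_eventuallyEq {f g : (Fin 2 → Fin N → ℂ) → ℂ} {z : Fin 2 → Fin N → ℂ}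
    (h : f =ᶠ[𝓝 z] g) (i : Fin 2) (p : Fin N) : pdm i p f z = pdm i p g z := by
  simp only [pdm, h.fderiv_eq]

lemma fderiv_cartanLift_apply (α : Fin N → ℂ) {g : (Fin N → ℂ) → ℂ} {z : Fin 2 → Fin N → ℂ}
    (hz : ∀ j, z 1 j ∈ slitPlane) (hg : DifferentiableAt ℂ g (ratioCoords z))
    (v : Fin 2 → Fin N → ℂ) :
    fderiv ℂ (cartanLift α g) z v
      = torusWeight α z * fderiv ℂ g (ratioCoords z) (fderiv ℂ ratioCoords z v)
        + g (ratioCoords z) * fderiv ℂ (torusWeight α) z v := by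
  have hX := (hasFDerivAt_ratioCoords fun j => slitPlane_ne_zero (hz j)).differentiableAt
  have hderiv : HasFDerivAt (cartanLift α g) _ z :=
    (hasFDerivAt_torusWeight α hz).differentiableAt.hasFDerivAt.mul
      (hg.hasFDerivAt.comp z hX.hasFDerivAt)
  simp [hderiv.fderiv]

lemma pdm_zero_cartanLift (α : Fin N → ℂ) {g : (Fin N → ℂ) → ℂ} {z : Fin 2 → Fin N → ℂ}
    (hz : ∀ j, z 1 j ∈ slitPlane) (hg : DifferentiableAt ℂ g (ratioCoords z)) (p : Fin N) :
    pdm 0 p (cartanLift α g) z = cartanLift (α - Pi.single p 1) (pder p g) z := by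
  have hz' := fun j => slitPlane_ne_zero (hz j)
  rw [pdm, fderiv_cartanLift_apply α hz hg, fderiv_ratioCoords_single_zero hz',
    fderiv_torusWeight_single_zero α hz, fderiv_apply_single, cartanLift,
    torusWeight_sub_single α z p (hz' p)]
  ring

lemma pdm_one_cartanLift (α : Fin N → ℂ) {g : (Fin N → ℂ) → ℂ} {z : Fin 2 → Fin N → ℂ}
    (hz : ∀ j, z 1 j ∈ slitPlane) (hg : DifferentiableAt ℂ g (ratioCoords z)) (p : Fin N) :
    pdm 1 p (cartanLift α g) z
      = cartanLift (α - Pi.single p 1) (fun x => α p * g x - x p * pder p g x) z := by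
  have hz' := fun j => slitPlane_ne_zero (hz j)
  rw [pdm, fderiv_cartanLift_apply α hz hg, fderiv_ratioCoords_single_one hz',
    fderiv_torusWeight_single_one α hz, fderiv_apply_single, cartanLift,
    torusWeight_sub_single α z p (hz' p)]
  ring

lemma eventually_slitPlane_and_ratioCoords_mem {Ω : Set (Fin N → ℂ)} (hΩ : IsOpen Ω)
    {z : Fin 2 → Fin N → ℂ} (hz : ∀ j, z 1 j ∈ slitPlane) (hx : ratioCoords z ∈ Ω) :
    ∀ᶠ w in 𝓝 z, (∀ j, w 1 j ∈ slitPlane) ∧ ratioCoords w ∈ Ω := by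
  have hslit : ∀ᶠ w in 𝓝 z, ∀ j, w 1 j ∈ slitPlane := eventually_all.2 fun j =>
    (continuous_apply_apply 1 j).continuousAt.eventually_mem (isOpen_slitPlane.mem_nhds (hz j))
  have hX := (hasFDerivAt_ratioCoords fun j => slitPlane_ne_zero (hz j)).continuousAt
  exact hslit.and (hX.eventually_mem (hΩ.mem_nhds hx))

lemma pdm_zero_cartanLift_eventuallyEq (α : Fin N → ℂ) {Ω : Set (Fin N → ℂ)} (hΩ : IsOpen Ω)
    {g : (Fin N → ℂ) → ℂ} (hg : AnalyticOnNhd ℂ g Ω) {z : Fin 2 → Fin N → ℂ}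
    (hz : ∀ j, z 1 j ∈ slitPlane) (hx : ratioCoords z ∈ Ω) (p : Fin N) :
    pdm 0 p (cartanLift α g) =ᶠ[𝓝 z] cartanLift (α - Pi.single p 1) (pder p g) := by
  filter_upwards [eventually_slitPlane_and_ratioCoords_mem hΩ hz hx] with w ⟨hw, hwΩ⟩
  exact pdm_zero_cartanLift α hw (hg _ hwΩ).differentiableAt p

lemma pdm_one_cartanLift_eventuallyEq (α : Fin N → ℂ) {Ω : Set (Fin N → ℂ)} (hΩ : IsOpen Ω)
    {g : (Fin N → ℂ) → ℂ} (hg : AnalyticOnNhd ℂ g Ω) {z : Fin 2 → Fin N → ℂ}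
    (hz : ∀ j, z 1 j ∈ slitPlane) (hx : ratioCoords z ∈ Ω) (p : Fin N) :
    pdm 1 p (cartanLift α g)
      =ᶠ[𝓝 z] cartanLift (α - Pi.single p 1) (fun x => α p * g x - x p * pder p g x) := by
  filter_upwards [eventually_slitPlane_and_ratioCoords_mem hΩ hz hx] with w ⟨hw, hwΩ⟩
  exact pdm_one_cartanLift α hw (hg _ hwΩ).differentiableAt p

theorem gelfandBox_cartanLift (α : Fin N → ℂ) {Ω : Set (Fin N → ℂ)} (hΩ : IsOpen Ω)
    {Φ : (Fin N → ℂ) → ℂ} (hΦ : AnalyticOnNhd ℂ Φ Ω) {z : Fin 2 → Fin N → ℂ}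
    (hz : ∀ j, z 1 j ∈ slitPlane) (hx : ratioCoords z ∈ Ω) {p q : Fin N} (hpq : p ≠ q) :
    pdm 0 p (pdm 1 q (cartanLift α Φ)) z - pdm 1 p (pdm 0 q (cartanLift α Φ)) z
      = torusWeight (α - Pi.single q 1 - Pi.single p 1) z
        * eulerPoissonDarboux α p q Φ (ratioCoords z) := by
  have hΦx := (hΦ _ hx).differentiableAt
  have hΦqx := (hΦ.pder q _ hx).differentiableAt
  rw [pdm_congr_of_eventuallyEq (pdm_one_cartanLift_eventuallyEq α hΩ hΦ hz hx q),
    pdm_congr_of_eventuallyEq (pdm_zero_cartanLift_eventuallyEq α hΩ hΦ hz hx q),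
    pdm_zero_cartanLift _ hz (by fun_prop),
    pdm_one_cartanLift _ hz hΦqx, cartanLift, cartanLift,
    pder_const_mul_sub_coord_mul hΦx hΦqx _ hpq, eulerPoissonDarboux]
  simp only [Pi.sub_apply, ne_eq, hpq, not_false_eq_true, Pi.single_eq_of_ne, sub_zero]
  ring

end GelfandReduction

open GelfandReduction in
theorem stmt_10_general {N : ℕ} (α : Fin N → ℂ)
    (Ω : Set (Fin N → ℂ)) (hΩ : IsOpen Ω)
    (Φ : (Fin N → ℂ) → ℂ) (hΦ : AnalyticOnNhd ℂ Φ Ω)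
    (F : (Fin 2 → Fin N → ℂ) → ℂ)
    (hF : F = fun z => (∏ j, (z 1 j) ^ (α j)) * Φ (fun j => z 0 j / z 1 j)) :
    ∀ p q : Fin N, p ≠ q → ∀ z : Fin 2 → Fin N → ℂ,
      (∀ j, z 1 j ∈ Complex.slitPlane) →
      ∀ x : Fin N → ℂ, x = (fun j => z 0 j / z 1 j) → x ∈ Ω →
      (z 1 p * z 1 q * (pdm 0 p (pdm 1 q F) z - pdm 1 p (pdm 0 q F) z)
        = (∏ j, (z 1 j) ^ (α j)) *
          ((x p - x q) * pder p (pder q Φ) x + α q * pder p Φ x - α p * pder q Φ x)) ∧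
      ((pdm 0 p (pdm 1 q F) z - pdm 1 p (pdm 0 q F) z = 0) ↔
        (x p - x q) * pder p (pder q Φ) x + α q * pder p Φ x - α p * pder q Φ x = 0) := by
  intro p q hpq z hz x hx hxΩ
  subst hF hx
  have hz' := fun j => slitPlane_ne_zero (hz j)
  have hbox := gelfandBox_cartanLift α hΩ hΦ hz hxΩ hpq
  have hweight : z 1 p * z 1 q * torusWeight (α - Pi.single q 1 - Pi.single p 1) z
      = torusWeight α z := by
    rw [torusWeight_sub_single _ _ _ (hz' p), torusWeight_sub_single _ _ _ (hz' q)]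
    field_simp [hz' p, hz' q]
  have hmain : z 1 p * z 1 q * (pdm 0 p (pdm 1 q (cartanLift α Φ)) z
      - pdm 1 p (pdm 0 q (cartanLift α Φ)) z)
      = torusWeight α z * eulerPoissonDarboux α p q Φ (ratioCoords z) := by
    rw [hbox, ← hweight]
    ring
  have hiff : pdm 0 p (pdm 1 q (cartanLift α Φ)) z - pdm 1 p (pdm 0 q (cartanLift α Φ)) z = 0
      ↔ eulerPoissonDarboux α p q Φ (ratioCoords z) = 0 := by
    simp [hbox, torusWeight_ne_zero _ hz']
  exact ⟨hmain, hiff⟩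

/-- Proposition 3.6: the reduction of the Gelfand hypergeometric system.  For
`F(z) = (∏_j z_{2,j}^{α_j})·Φ(x(z))` with `x(z)_j = z_{1,j}/z_{2,j}`, one has
`z_{2,p}z_{2,q}·□_{p,q}F(z) = (∏_j z_{2,j}^{α_j})·[(x_p−x_q)∂_p∂_qΦ + α_q∂_pΦ − α_p∂_qΦ](x(z))`;
in particular `□_{p,q}F = 0` at `z` iff `Φ` satisfies the Euler–Poisson–Darboux equation
at `x(z)`. -/
theorem stmt_10 {N : ℕ} (hN : 2 ≤ N) (α : Fin N → ℂ)
    (Ω : Set (Fin N → ℂ)) (hΩ : IsOpen Ω)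
    (Φ : (Fin N → ℂ) → ℂ) (hΦ : AnalyticOnNhd ℂ Φ Ω)
    (F : (Fin 2 → Fin N → ℂ) → ℂ)
    (hF : F = fun z => (∏ j, (z 1 j) ^ (α j)) * Φ (fun j => z 0 j / z 1 j)) :
    ∀ p q : Fin N, p ≠ q → ∀ z : Fin 2 → Fin N → ℂ,
      (∀ j, z 1 j ∈ Complex.slitPlane) →
      ∀ x : Fin N → ℂ, x = (fun j => z 0 j / z 1 j) → x ∈ Ω →
      (z 1 p * z 1 q * (pdm 0 p (pdm 1 q F) z - pdm 1 p (pdm 0 q F) z)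
        = (∏ j, (z 1 j) ^ (α j)) *
          ((x p - x q) * pder p (pder q Φ) x + α q * pder p Φ x - α p * pder q Φ x)) ∧
      ((pdm 0 p (pdm 1 q F) z - pdm 1 p (pdm 0 q F) z = 0) ↔
        (x p - x q) * pder p (pder q Φ) x + α q * pder p Φ x - α p * pder q Φ x = 0) :=
  stmt_10_general α Ω hΩ Φ hΦ F hF
end

section
/- Let N ≥ 3, α ∈ ℂ^N, let Ω ⊆ {x ∈ ℂ^N : x_a ≠ x_b for all a ≠ b} be open, and let u : Ω → ℂ be holomorphic (three times differentiable). For distinct indices p, q write M_{p,q}(α)u := ∂_p∂_q u + (α_q/(x_p − x_q))·∂_p u + (α_p/(x_q − x_p))·∂_q u. Then for any pairwise distinct 1 ≤ i, j, k ≤ N and all x ∈ Ω: ∂_k( M_{i,j}(α)u ) − ∂_i( M_{j,k}(α)u ) = −α_j·( (x_k − x_i)/((x_i − x_j)(x_j − x_k)) )·M_{i,k}(α)u − (α_k/(x_j − x_k))·M_{i,j}(α)u − (α_i/(x_i − x_j))·M_{j,k}(α)u. -/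
/-- The Euler–Poisson–Darboux operator
`M_{p,q}(α) = ∂_p∂_q + (α_q/(x_p−x_q))∂_p + (α_p/(x_q−x_p))∂_q`. -/
noncomputable def Mop {N : ℕ} (α : Fin N → ℂ) (p q : Fin N) (f : (Fin N → ℂ) → ℂ) :
    (Fin N → ℂ) → ℂ :=
  fun x => pder p (pder q f) x + (α q / (x p - x q)) * pder p f x
    + (α p / (x q - x p)) * pder q f x

/-!
Once both sides are expanded, the identity is a matter of commuting partial derivatives of the
holomorphic `u` and of rational-function algebra in `x_i, x_j, x_k`. The one analytic point is
that `∂_r` passes through the coefficients `α_q/(x_p − x_q)` of `M_{p,q}` when `r ∉ {p, q}`, so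
`∂_k M_{i,j} u` and `∂_i M_{j,k} u` only involve derivatives of `u`; their third-order terms
`∂_k∂_i∂_j u` and `∂_i∂_j∂_k u` then cancel.
-/

variable {N : ℕ}

section PartialDerivatives

variable {f g : (Fin N → ℂ) → ℂ} {x : Fin N → ℂ}

theorem AnalyticAt.pder (p : Fin N) (hf : AnalyticAt ℂ f x) :
    AnalyticAt ℂ (_root_.pder p f) x := by
  change AnalyticAt ℂ ((ContinuousLinearMap.apply ℂ ℂ (Pi.single p (1 : ℂ))) ∘ fderiv ℂ f) x
  exact (ContinuousLinearMap.analyticAt _ _).comp hf.fderiv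

theorem Filter.EventuallyEq.pder_eq (p : Fin N) (h : f =ᶠ[nhds x] g) :
    pder p f x = pder p g x := by
  simp only [pder, h.fderiv_eq]

theorem pder_pder_comm (hf : AnalyticAt ℂ f x) (p q : Fin N) :
    pder p (pder q f) x = pder q (pder p f) x := by
  have hsecond (p q : Fin N) :
      pder p (pder q f) x = fderiv ℂ (fderiv ℂ f) x (Pi.single p 1) (Pi.single q 1) := by
    change fderiv ℂ ((ContinuousLinearMap.apply ℂ ℂ (Pi.single q (1 : ℂ))) ∘ fderiv ℂ f) x _ = _
    rw [fderiv_comp x (ContinuousLinearMap.differentiableAt _) hf.fderiv.differentiableAt]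
    simp
  rw [hsecond, hsecond, hf.contDiffAt.isSymmSndFDerivAt_of_omega]

theorem pder_pder_pder_comm (hf : AnalyticAt ℂ f x) (i j k : Fin N) :
    pder k (pder i (pder j f)) x = pder i (pder j (pder k f)) x := by
  have hnear : pder k (pder j f) =ᶠ[nhds x] pder j (pder k f) :=
    hf.eventually_analyticAt.mono fun y hy => pder_pder_comm hy k j
  rw [pder_pder_comm (hf.pder j) k i, hnear.pder_eq]

theorem pder_add (hf : DifferentiableAt ℂ f x) (hg : DifferentiableAt ℂ g x) (p : Fin N) :
    pder p (fun y => f y + g y) x = pder p f x + pder p g x := by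
  simp only [pder, fderiv_fun_add hf hg, add_apply]

theorem pder_mul (hf : DifferentiableAt ℂ f x) (hg : DifferentiableAt ℂ g x) (p : Fin N) :
    pder p (fun y => f y * g y) x = f x * pder p g x + g x * pder p f x := by
  simp only [pder, fderiv_fun_mul hf hg, add_apply, smul_apply, smul_eq_mul]

end PartialDerivatives

theorem pder_const_div_sub_eq_zero (c : ℂ) {a b r : Fin N} (hra : r ≠ a) (hrb : r ≠ b)
    {x : Fin N → ℂ} (hab : x a ≠ x b) :
    pder r (fun y => c / (y a - y b)) x = 0 := by
  let L : (Fin N → ℂ) →L[ℂ] ℂ := .proj (R := ℂ) (φ := fun _ => ℂ) a - .proj b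
  have hc : DifferentiableAt ℂ (fun t : ℂ => c / t) (L x) :=
    (differentiableAt_const c).div differentiableAt_id (sub_ne_zero.2 hab)
  change fderiv ℂ ((fun t : ℂ => c / t) ∘ L) x (Pi.single r 1) = 0
  rw [fderiv_comp x hc L.differentiableAt, L.fderiv]
  simp [L, Pi.single_eq_of_ne hra.symm, Pi.single_eq_of_ne hrb.symm]

theorem pder_Mop_of_ne (α : Fin N → ℂ) {u : (Fin N → ℂ) → ℂ} {x : Fin N → ℂ}
    (hu : AnalyticAt ℂ u x) {p q r : Fin N} (hrp : r ≠ p) (hrq : r ≠ q) (hpq : x p ≠ x q) :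
    pder r (Mop α p q u) x
      = pder r (pder p (pder q u)) x + (α q / (x p - x q)) * pder r (pder p u) x
        + (α p / (x q - x p)) * pder r (pder q u) x := by
  have hcpq : DifferentiableAt ℂ (fun y : Fin N → ℂ => α q / (y p - y q)) x := by
    fun_prop (disch := exact sub_ne_zero.2 hpq)
  have hcqp : DifferentiableAt ℂ (fun y : Fin N → ℂ => α p / (y q - y p)) x := by
    fun_prop (disch := exact sub_ne_zero.2 hpq.symm)
  have hpu := (hu.pder p).differentiableAt
  have hqu := (hu.pder q).differentiableAt
  have hpqu := ((hu.pder q).pder p).differentiableAt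
  unfold Mop
  rw [pder_add (by fun_prop) (by fun_prop), pder_add hpqu (by fun_prop),
    pder_mul hcpq hpu, pder_mul hcqp hqu, pder_const_div_sub_eq_zero _ hrp hrq hpq,
    pder_const_div_sub_eq_zero _ hrq hrp hpq.symm]
  ring

/-- `u_S` stands for the partial derivative of `u` in the indices `S`. -/
theorem s_pair_algebra (xi xj xk αi αj αk ui uj uk uij uik ujk uijk : ℂ)
    (hij : xi ≠ xj) (hjk : xj ≠ xk) (hik : xi ≠ xk) :
    uijk + αj / (xi - xj) * uik + αi / (xj - xi) * ujk
      - (uijk + αk / (xj - xk) * uij + αj / (xk - xj) * uik)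
    = -αj * ((xk - xi) / ((xi - xj) * (xj - xk))) * (uik + αk / (xi - xk) * ui + αi / (xk - xi) * uk)
      - αk / (xj - xk) * (uij + αj / (xi - xj) * ui + αi / (xj - xi) * uj)
      - αi / (xi - xj) * (ujk + αk / (xj - xk) * uj + αj / (xk - xj) * uk) := by
  have := sub_ne_zero.2 hij; have := sub_ne_zero.2 hij.symm
  have := sub_ne_zero.2 hjk; have := sub_ne_zero.2 hjk.symm
  have := sub_ne_zero.2 hik; have := sub_ne_zero.2 hik.symm
  field_simp
  ring

theorem stmt_12_general {N : ℕ} (α : Fin N → ℂ)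
    (Ω : Set (Fin N → ℂ))
    (hΩsub : Ω ⊆ {x | ∀ a b : Fin N, a ≠ b → x a ≠ x b})
    (u : (Fin N → ℂ) → ℂ) (hu : AnalyticOnNhd ℂ u Ω) :
    ∀ i j k : Fin N, i ≠ j → j ≠ k → i ≠ k → ∀ x ∈ Ω,
      pder k (Mop α i j u) x - pder i (Mop α j k u) x
        = -(α j) * ((x k - x i) / ((x i - x j) * (x j - x k))) * Mop α i k u x
          - (α k / (x j - x k)) * Mop α i j u x
          - (α i / (x i - x j)) * Mop α j k u x := by
  intro i j k hij hjk hik x hx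
  have hux := hu x hx
  have hdistinct := hΩsub hx
  rw [pder_Mop_of_ne α hux hik.symm hjk.symm (hdistinct i j hij),
    pder_Mop_of_ne α hux hij hik (hdistinct j k hjk), pder_pder_pder_comm hux,
    pder_pder_comm hux k i, pder_pder_comm hux k j]
  exact s_pair_algebra _ _ _ _ _ _ _ _ _ _ _ _ _ (hdistinct i j hij) (hdistinct j k hjk)
    (hdistinct i k hik)

/-- Proposition 4.1 (the S-pair identity): for pairwise distinct `i, j, k`,
`∂_k(M_{i,j}(α)u) − ∂_i(M_{j,k}(α)u)
 = −α_j·((x_k−x_i)/((x_i−x_j)(x_j−x_k)))·M_{i,k}(α)u − (α_k/(x_j−x_k))·M_{i,j}(α)u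
   − (α_i/(x_i−x_j))·M_{j,k}(α)u`. -/
theorem stmt_12 {N : ℕ} (hN : 3 ≤ N) (α : Fin N → ℂ)
    (Ω : Set (Fin N → ℂ)) (hΩ : IsOpen Ω)
    (hΩsub : Ω ⊆ {x | ∀ a b : Fin N, a ≠ b → x a ≠ x b})
    (u : (Fin N → ℂ) → ℂ) (hu : AnalyticOnNhd ℂ u Ω) :
    ∀ i j k : Fin N, i ≠ j → j ≠ k → i ≠ k → ∀ x ∈ Ω,
      pder k (Mop α i j u) x - pder i (Mop α j k u) x
        = -(α j) * ((x k - x i) / ((x i - x j) * (x j - x k))) * Mop α i k u x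
          - (α k / (x j - x k)) * Mop α i j u x
          - (α i / (x i - x j)) * Mop α j k u x :=
  stmt_12_general α Ω hΩsub u hu
end
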